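/- arXiv:2111.07463 — 2 statements merged into one kernel-verified Lean document; each statement's English description precedes it below -/
import Mathlib

section
/- Assume ĥ_k ≠ 0 and that for some index k' ≠ k the estimation-error covariance E_{k'} is Hermitian positive definite. Let P and Q be power vectors with strictly positive entries such that Q_j = P_j for all j ≠ k' and Q_{k'} > P_{k'}. Then SINR_k(Q) < SINR_k(P); that is, the uplink SINR of user k is strictly decreasing in the transmit power of any other user. (Second part of the competitiveness condition of a competitive utility function.) -/
open Matrix Finset
open scoped ComplexOrder

noncomputable section

/-- Estimation-error-plus-noise covariance `D(P) = Σⱼ Pⱼ Eⱼ + C_z`. -/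
def Dmat {K n : ℕ} (E : Fin K → Matrix (Fin n) (Fin n) ℂ)
    (Cz : Matrix (Fin n) (Fin n) ℂ) (P : Fin K → ℝ) : Matrix (Fin n) (Fin n) ℂ :=
  (∑ j, (P j : ℂ) • E j) + Cz

/-- Interference-plus-noise covariance of user `k`:
`Ω_k(P) = Σ_{k'≠k} P_{k'} hhat_{k'} hhat_{k'}ᴴ + D(P)`. -/
def Omat {K n : ℕ} (hhat : Fin K → Fin n → ℂ) (E : Fin K → Matrix (Fin n) (Fin n) ℂ)
    (Cz : Matrix (Fin n) (Fin n) ℂ) (k : Fin K) (P : Fin K → ℝ) :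
    Matrix (Fin n) (Fin n) ℂ :=
  (∑ k' ∈ Finset.univ.erase k, (P k' : ℂ) • vecMulVec (hhat k') (star (hhat k'))) +
    Dmat E Cz P

/-- Uplink SINR of user `k`: `SINR_k(P) = P_k · hhat_kᴴ Ω_k(P)⁻¹ hhat_k`. -/
def SINR {K n : ℕ} (hhat : Fin K → Fin n → ℂ) (E : Fin K → Matrix (Fin n) (Fin n) ℂ)
    (Cz : Matrix (Fin n) (Fin n) ℂ) (k : Fin K) (P : Fin K → ℝ) : ℝ :=
  P k * (star (hhat k) ⬝ᵥ (Omat hhat E Cz k P)⁻¹ *ᵥ hhat k).re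

/-- A rank-one matrix `v vᴴ` is positive semidefinite. -/
lemma psd_vecMulVec {n : ℕ} (v : Fin n → ℂ) : (vecMulVec v (star v)).PosSemidef := by
  rw [vecMulVec_eq (Fin 1)]
  have : replicateRow (Fin 1) (star v) = (replicateCol (Fin 1) v)ᴴ := by ext i j; simp
  rw [this]
  exact posSemidef_self_mul_conjTranspose _

/-- Scaling a PSD matrix by a nonnegative real keeps it PSD. -/
lemma psd_smul_real {n : ℕ} {r : ℝ} (hr : 0 ≤ r) {M : Matrix (Fin n) (Fin n) ℂ}
    (hM : M.PosSemidef) : ((r : ℂ) • M).PosSemidef := by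
  refine PosSemidef.of_dotProduct_mulVec_nonneg ?_ ?_
  · unfold Matrix.IsHermitian
    rw [conjTranspose_smul, hM.1.eq]
    simp
  · intro x
    rw [smul_mulVec, dotProduct_smul, smul_eq_mul]
    exact mul_nonneg (by exact_mod_cast hr) (hM.dotProduct_mulVec_nonneg x)

/-- Scaling a positive definite matrix by a positive real keeps it positive definite. -/
lemma pd_smul_real {n : ℕ} {r : ℝ} (hr : 0 < r) {M : Matrix (Fin n) (Fin n) ℂ}
    (hM : M.PosDef) : ((r : ℂ) • M).PosDef := by
  refine PosDef.of_dotProduct_mulVec_pos ?_ ?_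
  · unfold Matrix.IsHermitian
    rw [conjTranspose_smul, hM.1.eq]
    simp
  · intro x hx
    rw [smul_mulVec, dotProduct_smul, smul_eq_mul]
    exact mul_pos (by exact_mod_cast hr) (hM.dotProduct_mulVec_pos hx)

/-- A finite sum of PSD matrices is PSD. -/
lemma psd_sum {K n : ℕ} (s : Finset (Fin K)) (f : Fin K → Matrix (Fin n) (Fin n) ℂ)
    (h : ∀ i ∈ s, (f i).PosSemidef) : (∑ i ∈ s, f i).PosSemidef :=
  Finset.sum_induction f _ (fun _ _ ha hb => ha.add hb) .zero h

/-- If `B - A` is positive definite (with `A, B` positive definite), then the quadratic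
form of `B⁻¹` is strictly below that of `A⁻¹` at any nonzero vector. -/
lemma key_inv_lt {n : ℕ} {A B : Matrix (Fin n) (Fin n) ℂ} (hA : A.PosDef) (hB : B.PosDef)
    (hC : (B - A).PosDef) {x : Fin n → ℂ} (hx : x ≠ 0) :
    (star x ⬝ᵥ B⁻¹ *ᵥ x).re < (star x ⬝ᵥ A⁻¹ *ᵥ x).re := by
  haveI := hA.isUnit.invertible
  haveI := hB.isUnit.invertible
  set C : Matrix (Fin n) (Fin n) ℂ := B - A with hCdef
  have e1 : B⁻¹ * C * A⁻¹ = A⁻¹ - B⁻¹ := by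
    rw [hCdef, Matrix.mul_sub, Matrix.inv_mul_of_invertible, Matrix.sub_mul, one_mul,
      Matrix.mul_assoc, Matrix.mul_inv_of_invertible, Matrix.mul_one]
  have e4 : A⁻¹ * C * B⁻¹ = A⁻¹ - B⁻¹ := by
    rw [hCdef, Matrix.mul_sub, Matrix.inv_mul_of_invertible, Matrix.sub_mul, one_mul,
      Matrix.mul_assoc, Matrix.mul_inv_of_invertible, Matrix.mul_one]
  have e2 : B⁻¹ * C * A⁻¹ * C * B⁻¹ = (A⁻¹ - B⁻¹) * C * B⁻¹ := by rw [e1]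
  have e3 : B⁻¹ * C * B⁻¹ + (A⁻¹ - B⁻¹) * C * B⁻¹ = A⁻¹ * C * B⁻¹ := by noncomm_ring
  have hid : A⁻¹ - B⁻¹ = B⁻¹ * C * B⁻¹ + B⁻¹ * C * A⁻¹ * C * B⁻¹ := by
    rw [e2, e3, e4]
  set y : Fin n → ℂ := B⁻¹ *ᵥ x with hy
  have hyne : y ≠ 0 := by
    intro h
    apply hx
    have hBy : B *ᵥ y = x := by
      rw [hy, mulVec_mulVec, Matrix.mul_inv_of_invertible, one_mulVec]
    rw [h, mulVec_zero] at hBy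
    exact hBy.symm
  have hBinvH : B⁻¹ᴴ = B⁻¹ := hB.isHermitian.inv.eq
  have hstar : star x ᵥ* B⁻¹ = star y := by rw [hy, star_mulVec, hBinvH]
  have q1 : star x ⬝ᵥ (B⁻¹ * C * B⁻¹) *ᵥ x = star y ⬝ᵥ C *ᵥ y := by
    rw [← mulVec_mulVec, ← mulVec_mulVec, dotProduct_mulVec, hstar, ← hy]
  have q1pos : 0 < star x ⬝ᵥ (B⁻¹ * C * B⁻¹) *ᵥ x := by
    rw [q1]; exact hC.dotProduct_mulVec_pos hyne
  have hM : (C * B⁻¹)ᴴ * A⁻¹ * (C * B⁻¹) = B⁻¹ * C * A⁻¹ * C * B⁻¹ := by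
    rw [conjTranspose_mul, hBinvH, hC.isHermitian.eq]
    noncomm_ring
  have q2nonneg : 0 ≤ star x ⬝ᵥ (B⁻¹ * C * A⁻¹ * C * B⁻¹) *ᵥ x := by
    rw [← hM]
    exact (hA.inv.posSemidef.conjTranspose_mul_mul_same (C * B⁻¹)).dotProduct_mulVec_nonneg x
  have htot : 0 < star x ⬝ᵥ (A⁻¹ - B⁻¹) *ᵥ x := by
    rw [hid, add_mulVec, dotProduct_add]
    exact add_pos_of_pos_of_nonneg q1pos q2nonneg
  rw [sub_mulVec, dotProduct_sub] at htot
  have := (Complex.lt_def.mp htot).1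
  simp only [Complex.zero_re, Complex.sub_re] at this
  linarith

/-- Increasing one coordinate of the power vector changes a weighted sum by one term. -/
lemma sum_smul_diff {K n : ℕ} (s : Finset (Fin K)) (M : Fin K → Matrix (Fin n) (Fin n) ℂ)
    (P Q : Fin K → ℝ) (k' : Fin K) (hk' : k' ∈ s) (hPQ : ∀ j, j ≠ k' → Q j = P j) :
    ∑ j ∈ s, (Q j : ℂ) • M j
      = (∑ j ∈ s, (P j : ℂ) • M j) + ((Q k' - P k' : ℝ) : ℂ) • M k' := by
  rw [← sub_eq_iff_eq_add']
  rw [← Finset.sum_sub_distrib]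
  rw [Finset.sum_eq_single_of_mem k' hk' (fun j hj hne => by rw [hPQ j hne, sub_self])]
  rw [← sub_smul]
  push_cast
  ring_nf

/-- `Ω_k(P)` is positive definite for strictly positive `P`. -/
lemma Omat_posDef {K n : ℕ} (hhat : Fin K → Fin n → ℂ)
    (E : Fin K → Matrix (Fin n) (Fin n) ℂ) (hE : ∀ j, (E j).PosSemidef)
    (Cz : Matrix (Fin n) (Fin n) ℂ) (hCz : Cz.PosDef)
    (k : Fin K) (P : Fin K → ℝ) (hP : ∀ j, 0 < P j) :
    (Omat hhat E Cz k P).PosDef := by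
  unfold Omat Dmat
  have h1 : (∑ k' ∈ Finset.univ.erase k,
      (P k' : ℂ) • vecMulVec (hhat k') (star (hhat k'))).PosSemidef :=
    psd_sum _ _ (fun i _ => psd_smul_real (hP i).le (psd_vecMulVec _))
  have h2 : (∑ j, (P j : ℂ) • E j).PosSemidef :=
    psd_sum _ _ (fun i _ => psd_smul_real (hP i).le (hE i))
  exact Matrix.PosDef.posSemidef_add h1 (Matrix.PosDef.posSemidef_add h2 hCz)

/-- **Competitiveness, second part: the uplink SINR of user `k` is strictly decreasing
in the transmit power of any other user.**  Assume `ĥ_k ≠ 0` and that for some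
`k' ≠ k` the estimation-error covariance `E_{k'}` is Hermitian positive definite.
If `P`, `Q` are strictly positive power vectors with `Q_j = P_j` for all `j ≠ k'` and
`Q_{k'} > P_{k'}`, then `SINR_k(Q) < SINR_k(P)`. -/
theorem SINR_strictAnti_other_power {K n : ℕ}
    (hhat : Fin K → Fin n → ℂ)
    (E : Fin K → Matrix (Fin n) (Fin n) ℂ) (hE : ∀ j, (E j).PosSemidef)
    (Cz : Matrix (Fin n) (Fin n) ℂ) (hCz : Cz.PosDef)
    (k k' : Fin K) (hk : hhat k ≠ 0) (hkk' : k' ≠ k)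
    (hEk' : (E k').PosDef)
    (P Q : Fin K → ℝ) (hP : ∀ j, 0 < P j) (hQ : ∀ j, 0 < Q j)
    (hPQ : ∀ j, j ≠ k' → Q j = P j) (hQk' : P k' < Q k') :
    SINR hhat E Cz k Q < SINR hhat E Cz k P := by
  set A := Omat hhat E Cz k P with hAdef
  set B := Omat hhat E Cz k Q with hBdef
  have hApd : A.PosDef := Omat_posDef hhat E hE Cz hCz k P hP
  have hBpd : B.PosDef := Omat_posDef hhat E hE Cz hCz k Q hQ
  -- the difference
  have hk'mem : k' ∈ Finset.univ.erase k := Finset.mem_erase.mpr ⟨hkk', Finset.mem_univ _⟩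
  have hdiff : B = A + ((Q k' - P k' : ℝ) : ℂ) •
      (vecMulVec (hhat k') (star (hhat k')) + E k') := by
    rw [hAdef, hBdef]
    unfold Omat Dmat
    rw [sum_smul_diff (Finset.univ.erase k) _ P Q k' hk'mem hPQ,
      sum_smul_diff Finset.univ _ P Q k' (Finset.mem_univ _) hPQ, smul_add]
    abel
  have hCpd : (B - A).PosDef := by
    rw [hdiff, add_sub_cancel_left]
    exact pd_smul_real (by linarith) (Matrix.PosDef.posSemidef_add (psd_vecMulVec (hhat k')) hEk')
  have hlt := key_inv_lt hApd hBpd hCpd hk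
  have hPk : Q k = P k := hPQ k (fun h => hkk' h.symm)
  unfold SINR
  rw [← hAdef, ← hBdef, hPk]
  exact mul_lt_mul_of_pos_left hlt (hP k)

end
end

section
/- Let A ∈ ℂ^{n×n} be Hermitian positive definite and h ∈ ℂ^n. Then A + h h^H is invertible and h^H (A + h h^H)^{-2} h = h^H A^{-2} h / (1 + h^H A^{-1} h)², where M^{-2} denotes the square of the inverse of M. -/
open Matrix
open scoped ComplexOrder

lemma vecMulVec_mulVec' {n : ℕ} (h x : Fin n → ℂ) :
    vecMulVec h (star h) *ᵥ x = (star h ⬝ᵥ x) • h := by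
  ext i
  simp [mulVec, dotProduct, vecMulVec_apply, Finset.mul_sum, Finset.sum_mul, mul_comm,
    mul_left_comm]

lemma vecMulVec_posSemidef {n : ℕ} (h : Fin n → ℂ) :
    (vecMulVec h (star h)).PosSemidef := by
  rw [posSemidef_iff_dotProduct_mulVec]
  constructor
  · ext i j
    simp [conjTranspose_apply, vecMulVec_apply, mul_comm]
  · intro x
    rw [vecMulVec_mulVec', dotProduct_smul]
    have : star x ⬝ᵥ h = star (star h ⬝ᵥ x) := by
      simp [dotProduct, mul_comm]
    rw [this, smul_eq_mul]
    exact mul_star_self_nonneg _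

/-- **Squared norm of the unnormalized RZF precoding vector.**
Let `A` be Hermitian positive definite and `h ∈ ℂ^n`.  Then `A + h hᴴ` is invertible and
`hᴴ (A + h hᴴ)⁻² h = hᴴ A⁻² h / (1 + hᴴ A⁻¹ h)²`. -/
theorem rzf_vector_norm {n : ℕ}
    (A : Matrix (Fin n) (Fin n) ℂ) (hA : A.PosDef) (h : Fin n → ℂ) :
    IsUnit (A + vecMulVec h (star h)).det ∧
    star h ⬝ᵥ ((A + vecMulVec h (star h))⁻¹ ^ 2) *ᵥ h =
      (star h ⬝ᵥ (A⁻¹ ^ 2) *ᵥ h) / (1 + star h ⬝ᵥ A⁻¹ *ᵥ h) ^ 2 := by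
  set B := A + vecMulVec h (star h) with hBdef
  have hB : B.PosDef := hA.add_posSemidef (vecMulVec_posSemidef h)
  have hBdet : IsUnit B.det := (isUnit_iff_isUnit_det B).mp hB.isUnit
  refine ⟨hBdet, ?_⟩
  have hAinv : A⁻¹.PosDef := hA.inv
  set q : ℂ := star h ⬝ᵥ A⁻¹ *ᵥ h with hq
  have hq0 : 0 ≤ q := hAinv.posSemidef.dotProduct_mulVec_nonneg h
  set c : ℂ := 1 + q with hc
  have hc0 : c ≠ 0 := by
    have : (0:ℂ) < 1 + q := lt_of_lt_of_le one_pos (by simpa using add_le_add_left hq0 1)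
    exact this.ne'
  have hcstar : star c = c := by
    rw [Complex.nonneg_iff] at hq0
    apply Complex.ext <;> simp [hc, hq0.2.symm]
  set u : Fin n → ℂ := A⁻¹ *ᵥ h with hu
  have hAu : A *ᵥ u = h := by
    have := hA.isUnit.invertible
    rw [hu, mulVec_mulVec, Matrix.mul_nonsing_inv A ((isUnit_iff_isUnit_det A).mp hA.isUnit),
      one_mulVec]
  have hBu : B *ᵥ u = c • h := by
    rw [hBdef, add_mulVec, hAu, vecMulVec_mulVec', hc, add_smul, one_smul, hq, hu]
  have hBinvh : B⁻¹ *ᵥ h = c⁻¹ • u := by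
    have := hB.isUnit.invertible
    have h1 : B⁻¹ *ᵥ (B *ᵥ u) = u := by
      rw [mulVec_mulVec, Matrix.nonsing_inv_mul B hBdet, one_mulVec]
    calc B⁻¹ *ᵥ h = B⁻¹ *ᵥ (c⁻¹ • (B *ᵥ u)) := by
          rw [hBu, smul_smul, inv_mul_cancel₀ hc0, one_smul]
      _ = c⁻¹ • (B⁻¹ *ᵥ (B *ᵥ u)) := by rw [mulVec_smul]
      _ = c⁻¹ • u := by rw [h1]
  -- key: for hermitian M, star h ⬝ᵥ (M*M) *ᵥ h = star (M *ᵥ h) ⬝ᵥ (M *ᵥ h)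
  have key : ∀ (M : Matrix (Fin n) (Fin n) ℂ), M.IsHermitian →
      star h ⬝ᵥ (M * M) *ᵥ h = star (M *ᵥ h) ⬝ᵥ (M *ᵥ h) := by
    intro M hM
    rw [← mulVec_mulVec, dotProduct_mulVec, star_mulVec, hM.eq]
  have hBinvH : (B⁻¹).IsHermitian := hB.inv.isHermitian
  have hAinvH : (A⁻¹).IsHermitian := hAinv.isHermitian
  rw [sq, sq, key _ hBinvH, key _ hAinvH, hBinvh]
  rw [star_smul, smul_dotProduct, dotProduct_smul, smul_eq_mul, smul_eq_mul, star_inv₀, hcstar]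
  rw [← hu, sq, div_eq_mul_inv, mul_inv]
  ring
end
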